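/- arXiv:1912.05197 — 2 statements merged into one kernel-verified Lean document; each statement's English description precedes it below -/
import Mathlib

section
/- For every index i ∈ {1,…,n}, with Δ = {1,…,n}∖{i}, the principal submatrix L[[Δ]] of the Laplacian L obtained by deleting the i-th block row and i-th block column is positive definite. -/
open Matrix BigOperators

noncomputable section

/-- The Laplacian of a graph on `Fin n` whose edges carry `s × s` real matrix
weights `W i j`: the `(i,j)` block is `-(W i j)⁻¹` if `i ≠ j` are adjacent,
`0` if `i ≠ j` are non-adjacent, and `∑ k adjacent to i, (W i k)⁻¹` if `i = j`. -/
def lap (n s : ℕ) (G : SimpleGraph (Fin n)) [DecidableRel G.Adj]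
    (W : Fin n → Fin n → Matrix (Fin s) (Fin s) ℝ) :
    Matrix (Fin n × Fin s) (Fin n × Fin s) ℝ :=
  Matrix.of fun p q =>
    if p.1 = q.1 then (∑ k ∈ Finset.univ.filter (fun k => G.Adj p.1 k), (W p.1 k)⁻¹) p.2 q.2
    else if G.Adj p.1 q.1 then -((W p.1 q.1)⁻¹ p.2 q.2) else 0

/-- The inertia `(n₋, n₀, n₊)` of a real symmetric matrix: the numbers of
negative, zero and positive eigenvalues, counted with multiplicity.
(Junk value `(0,0,0)` on non-Hermitian matrices.) -/
def inertia {m : Type*} [Fintype m] [DecidableEq m] (A : Matrix m m ℝ) : ℕ × ℕ × ℕ :=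
  if hA : A.IsHermitian then
    ((Finset.univ.filter fun i => hA.eigenvalues i < 0).card,
     (Finset.univ.filter fun i => hA.eigenvalues i = 0).card,
     (Finset.univ.filter fun i => 0 < hA.eigenvalues i).card)
  else (0, 0, 0)

/-- A real matrix is negative definite. -/
def negDef {m : Type*} [Fintype m] (M : Matrix m m ℝ) : Prop :=
  M.IsHermitian ∧ ∀ x : m → ℝ, x ≠ 0 → x ⬝ᵥ M.mulVec x < 0

/-- A real matrix is negative semidefinite. -/
def negSemidef {m : Type*} [Fintype m] (M : Matrix m m ℝ) : Prop :=
  M.IsHermitian ∧ ∀ x : m → ℝ, x ⬝ᵥ M.mulVec x ≤ 0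

/-- The `ns × ns` block matrix `J` each of whose `n²` blocks is `I_s`. -/
def Jmat (n s : ℕ) : Matrix (Fin n × Fin s) (Fin n × Fin s) ℝ :=
  Matrix.of fun p q => if p.2 = q.2 then 1 else 0

/-- The `ns × s` matrix `U = e ⊗ I_s`, `e` the all-ones vector. -/
def Umat (n s : ℕ) : Matrix (Fin n × Fin s) (Fin s) ℝ :=
  Matrix.of fun p a => if p.2 = a then 1 else 0

/-!
For `x = (x_j)_j` split into blocks `x_j ∈ ℝˢ`, summing the block rows of `L` and symmetrizing over
the edges gives `2 xᵀ L x = ∑_{j ~ k} (x_j - x_k)ᵀ W_jk⁻¹ (x_j - x_k)`. Every term is nonnegative,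
and since the `W_jk⁻¹` are positive definite the sum vanishes only when `x_j = x_k` along every edge,
i.e. (as `G` is connected) when all blocks agree. A vector indexed by `Δ`, extended by `x_i = 0`,
can therefore have a nonpositive quadratic form only if it is zero.
-/

lemma SimpleGraph.sum_sum_adj_comm {V M : Type*} [Fintype V] [AddCommMonoid M]
    (G : SimpleGraph V) [DecidableRel G.Adj] (f : V → V → M) :
    ∑ j, ∑ k ∈ Finset.univ.filter (G.Adj j), f j k =
      ∑ j, ∑ k ∈ Finset.univ.filter (G.Adj j), f k j := by
  simp only [Finset.sum_filter]
  rw [Finset.sum_comm]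
  simp only [G.adj_comm]

lemma SimpleGraph.Reachable.eq_of_forall_adj {V α : Type*} {G : SimpleGraph V} {f : V → α}
    (hf : ∀ u v, G.Adj u v → f u = f v) {u v : V} (huv : G.Reachable u v) : f u = f v := by
  obtain ⟨w⟩ := huv
  induction w with
  | nil => rfl
  | cons hadj _ ih => exact (hf _ _ hadj).trans ih

lemma Matrix.dotProduct_submatrix_mulVec_self {m k R : Type*} [Fintype m] [Fintype k]
    [CommSemiring R] (M : Matrix m m R) {e : k → m} (he : Function.Injective e) (y : k → R) :
    y ⬝ᵥ M.submatrix e e *ᵥ y = Function.extend e y 0 ⬝ᵥ M *ᵥ Function.extend e y 0 := by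
  set x := Function.extend e y 0
  have hx : ∀ a, x (e a) = y a := he.extend_apply y 0
  have hx0 : ∀ p ∉ Set.range e, x p = 0 := fun p hp => Function.extend_apply' _ _ _ hp
  have hMx : ∀ p, (M *ᵥ x) p = ∑ a, M p (e a) * y a := fun p =>
    (Fintype.sum_of_injective e he _ _ (fun q hq => by simp [hx0 q hq]) (fun a => by rw [hx])).symm
  refine Fintype.sum_of_injective e he _ _ (fun p hp => by simp [hx0 p hp]) fun a => ?_
  rw [hx, hMx]
  rfl

section Laplacian

variable {n s : ℕ} (G : SimpleGraph (Fin n)) [DecidableRel G.Adj]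
  (W : Fin n → Fin n → Matrix (Fin s) (Fin s) ℝ)

lemma lap_mulVec_apply (x : Fin n × Fin s → ℝ) (j : Fin n) (a : Fin s) :
    (lap n s G W *ᵥ x) (j, a) =
      ∑ k ∈ Finset.univ.filter (G.Adj j),
        ((W j k)⁻¹ *ᵥ (Function.curry x j - Function.curry x k)) a := by
  have hsplit : ∀ k b, lap n s G W (j, a) (k, b) =
      (if j = k then (∑ k' ∈ Finset.univ.filter (G.Adj j), (W j k')⁻¹) a b else 0)
        - if G.Adj j k then (W j k)⁻¹ a b else 0 := by
    intro k b
    by_cases hjk : j = k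
    · subst hjk; simp [lap]
    · by_cases hadj : G.Adj j k <;> simp [lap, hjk, hadj]
  simp only [mulVec, dotProduct, Fintype.sum_prod_type]
  simp only [hsplit, sub_mul, Finset.sum_sub_distrib, ite_mul, zero_mul, Finset.sum_ite_irrel,
    Finset.sum_const_zero, Finset.sum_ite_eq, Finset.mem_univ, if_true, ← Finset.sum_filter,
    Matrix.sum_apply, Finset.sum_mul, Function.curry_apply, Pi.sub_apply, mul_sub]
  rw [Finset.sum_comm]

lemma dotProduct_lap_mulVec (x : Fin n × Fin s → ℝ) :
    x ⬝ᵥ lap n s G W *ᵥ x =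
      ∑ j, ∑ k ∈ Finset.univ.filter (G.Adj j),
        Function.curry x j ⬝ᵥ (W j k)⁻¹ *ᵥ (Function.curry x j - Function.curry x k) := by
  conv_lhs => rw [dotProduct, Fintype.sum_prod_type]
  simp only [lap_mulVec_apply, Finset.mul_sum, dotProduct, Function.curry_apply]
  exact Finset.sum_congr rfl fun j _ => Finset.sum_comm

lemma two_mul_dotProduct_lap_mulVec (hWsym : ∀ i j, W i j = W j i) (x : Fin n × Fin s → ℝ) :
    2 * (x ⬝ᵥ lap n s G W *ᵥ x) =
      ∑ j, ∑ k ∈ Finset.univ.filter (G.Adj j),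
        (Function.curry x j - Function.curry x k) ⬝ᵥ
          (W j k)⁻¹ *ᵥ (Function.curry x j - Function.curry x k) := by
  rw [two_mul, dotProduct_lap_mulVec]
  nth_rw 2 [G.sum_sum_adj_comm]
  rw [← Finset.sum_add_distrib]
  refine Finset.sum_congr rfl fun j _ => ?_
  rw [← Finset.sum_add_distrib]
  refine Finset.sum_congr rfl fun k _ => ?_
  rw [hWsym k j, ← neg_sub (Function.curry x j), mulVec_neg, dotProduct_neg, sub_dotProduct]
  ring

lemma lap_isHermitian (hWsym : ∀ i j, W i j = W j i)
    (hWpd : ∀ i j, G.Adj i j → (W i j).PosDef) : (lap n s G W).IsHermitian := by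
  have hA : ∀ j k, G.Adj j k → ∀ a b, (W j k)⁻¹ b a = (W j k)⁻¹ a b := fun j k hjk =>
    (hWpd j k hjk).inv.isHermitian.apply
  refine IsHermitian.ext fun ⟨j, a⟩ ⟨k, b⟩ => ?_
  by_cases hjk : j = k
  · subst hjk
    simp only [lap, of_apply, if_true, star_trivial, Matrix.sum_apply]
    exact Finset.sum_congr rfl fun k hk => hA j k (Finset.mem_filter.1 hk).2 a b
  · by_cases hadj : G.Adj j k
    · simp [lap, hjk, Ne.symm hjk, hadj, hadj.symm, hWsym k j, hA j k hadj]
    · simp [lap, hjk, Ne.symm hjk, hadj, G.adj_comm k j]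

lemma curry_eq_of_dotProduct_lap_mulVec_nonpos (hWsym : ∀ i j, W i j = W j i)
    (hWpd : ∀ i j, G.Adj i j → (W i j).PosDef) {x : Fin n × Fin s → ℝ}
    (hx : x ⬝ᵥ lap n s G W *ᵥ x ≤ 0) {j k : Fin n} (hjk : G.Adj j k) :
    Function.curry x j = Function.curry x k := by
  set d : Fin n → Fin n → Fin s → ℝ := fun j k => Function.curry x j - Function.curry x k
  have hterm : ∀ j, ∀ k ∈ Finset.univ.filter (G.Adj j), 0 ≤ d j k ⬝ᵥ (W j k)⁻¹ *ᵥ d j k :=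
    fun j k hk => (hWpd j k (Finset.mem_filter.1 hk).2).inv.posSemidef.dotProduct_mulVec_nonneg _
  have hsum : ∑ j, ∑ k ∈ Finset.univ.filter (G.Adj j), d j k ⬝ᵥ (W j k)⁻¹ *ᵥ d j k = 0 := by
    refine le_antisymm ?_ (Finset.sum_nonneg fun j _ => Finset.sum_nonneg (hterm j))
    rw [← two_mul_dotProduct_lap_mulVec G W hWsym]
    linarith
  have hzero : d j k ⬝ᵥ (W j k)⁻¹ *ᵥ d j k = 0 :=
    (Finset.sum_eq_zero_iff_of_nonneg (hterm j)).1
      ((Finset.sum_eq_zero_iff_of_nonneg fun j _ => Finset.sum_nonneg (hterm j)).1 hsum j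
        (Finset.mem_univ j)) k (Finset.mem_filter.2 ⟨Finset.mem_univ k, hjk⟩)
  by_contra hne
  have hpos := (hWpd j k hjk).inv.dotProduct_mulVec_pos (sub_ne_zero.2 hne)
  rw [star_trivial] at hpos
  exact hpos.ne' hzero

end Laplacian

theorem stmt3_general (n s : ℕ)
    (G : SimpleGraph (Fin n)) [DecidableRel G.Adj] (hG : G.Connected)
    (W : Fin n → Fin n → Matrix (Fin s) (Fin s) ℝ)
    (hWsym : ∀ i j, W i j = W j i)
    (hWpd : ∀ i j, G.Adj i j → (W i j).PosDef)
    (i : Fin n) :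
    ((lap n s G W).submatrix
      (fun p : {j : Fin n // j ≠ i} × Fin s => ((p.1 : Fin n), p.2))
      (fun p : {j : Fin n // j ≠ i} × Fin s => ((p.1 : Fin n), p.2))).PosDef := by
  set e : {j : Fin n // j ≠ i} × Fin s → Fin n × Fin s := fun p => (p.1, p.2)
  have he : Function.Injective e := fun p q hpq =>
    Prod.ext (Subtype.ext (Prod.ext_iff.1 hpq).1) (Prod.ext_iff.1 hpq).2
  refine PosDef.of_dotProduct_mulVec_pos ((lap_isHermitian G W hWsym hWpd).submatrix _)
    fun y hy => ?_
  rw [star_trivial, dotProduct_submatrix_mulVec_self _ he]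
  set x := Function.extend e y 0
  refine lt_of_not_ge fun hle => hy (funext fun p => ?_)
  have hblock : Function.curry x p.1 = Function.curry x i :=
    (hG.preconnected p.1 i).eq_of_forall_adj fun _ _ =>
      curry_eq_of_dotProduct_lap_mulVec_nonpos G W hWsym hWpd hle
  have hxi : x (i, p.2) = 0 :=
    Function.extend_apply' _ _ _ fun ⟨q, hq⟩ => q.1.2 (Prod.ext_iff.1 hq).1
  calc y p = x (e p) := (he.extend_apply y 0 p).symm
    _ = x (i, p.2) := congrFun hblock p.2
    _ = 0 := hxi

/-- For every i, the principal submatrix L[[Δ]], Δ = [n] ∖ {i}, of the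
Laplacian is positive definite. -/
theorem stmt3 (n s : ℕ) (hn : 0 < n) (hs : 0 < s)
    (G : SimpleGraph (Fin n)) [DecidableRel G.Adj] (hG : G.Connected)
    (W : Fin n → Fin n → Matrix (Fin s) (Fin s) ℝ)
    (hWsym : ∀ i j, W i j = W j i)
    (hWpd : ∀ i j, G.Adj i j → (W i j).PosDef)
    (i : Fin n) :
    ((lap n s G W).submatrix
      (fun p : {j : Fin n // j ≠ i} × Fin s => ((p.1 : Fin n), p.2))
      (fun p : {j : Fin n // j ≠ i} × Fin s => ((p.1 : Fin n), p.2))).PosDef :=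
  stmt3_general n s G hG W hWsym hWpd i
end
end

section
/- For every real number β ≥ 0, the matrix (D⁻¹ − βL)⁻¹ is negative semidefinite on M, the null space of J; that is, pᵀ(D⁻¹ − βL)⁻¹p ≤ 0 for every p ∈ ℝ^{ns} with Jp = 0. -/
open Matrix BigOperators

noncomputable section

/-
Put `q = (D⁻¹ - βL)⁻¹ p` and `r = D⁻¹ q`, so that `p = r - βLq` and `pᵀq = rᵀDr - β qᵀLq`.
The Laplacian is positive semidefinite and its block columns sum to zero, so `r` has zero block
sums together with `p`, and it remains to see that `D` is negative semidefinite on such vectors.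
For a dart `d = (u, v)` of the tree, the path from `i` to `j` traverses `d` exactly when `i` lies
on the `u`-side and `j` on the `v`-side of the bridge `uv`; hence `D` is a sum over darts of
"cut" block matrices. If `y` is the block sum of `x` over the `u`-side, the zero block sums force
the block sum over the `v`-side to be `-y`, so the dart contributes `-yᵀ W_d y ≤ 0`.
-/

open Function

theorem Matrix.dotProduct_inv_sub_smul_mulVec_nonpos {m : Type*} [Fintype m] [DecidableEq m]
    {D L : Matrix m m ℝ} {M : Submodule ℝ (m → ℝ)} (hD : IsUnit D.det)
    (hDM : ∀ x ∈ M, x ⬝ᵥ D *ᵥ x ≤ 0) (hL : ∀ x, 0 ≤ x ⬝ᵥ L *ᵥ x) (hLM : ∀ x, L *ᵥ x ∈ M)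
    {β : ℝ} (hβ : 0 ≤ β) {p : m → ℝ} (hp : p ∈ M) : p ⬝ᵥ (D⁻¹ - β • L)⁻¹ *ᵥ p ≤ 0 := by
  by_cases hA : IsUnit (D⁻¹ - β • L).det
  swap
  · simp [nonsing_inv_apply_not_isUnit _ hA]
  obtain ⟨q, rfl⟩ : ∃ q, p = (D⁻¹ - β • L) *ᵥ q :=
    ⟨(D⁻¹ - β • L)⁻¹ *ᵥ p, by rw [mulVec_mulVec, mul_nonsing_inv _ hA, one_mulVec]⟩
  set r := D⁻¹ *ᵥ q
  have hpq : (D⁻¹ - β • L) *ᵥ q = r - β • L *ᵥ q := by rw [sub_mulVec, smul_mulVec]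
  have hr : r ∈ M := by simpa [hpq] using M.add_mem hp (M.smul_mem β (hLM q))
  have hDr : D *ᵥ r = q := by rw [mulVec_mulVec, mul_nonsing_inv _ hD, one_mulVec]
  have hquad : (r - β • L *ᵥ q) ⬝ᵥ q = r ⬝ᵥ D *ᵥ r - β * (q ⬝ᵥ L *ᵥ q) := by
    rw [hDr, sub_dotProduct, smul_dotProduct, smul_eq_mul, dotProduct_comm (L *ᵥ q)]
  rw [mulVec_mulVec, nonsing_inv_mul _ hA, one_mulVec, hpq, hquad]
  nlinarith [hDM r hr, mul_nonneg hβ (hL q)]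

section Blocks
variable {ι σ : Type*} [Fintype ι] [Fintype σ]

lemma dotProduct_eq_sum_curry (x y : ι × σ → ℝ) : x ⬝ᵥ y = ∑ i, curry x i ⬝ᵥ curry y i := by
  simp [dotProduct, Fintype.sum_prod_type, curry]

lemma curry_mulVec (M : Matrix (ι × σ) (ι × σ) ℝ) (x : ι × σ → ℝ) (i : ι) :
    curry (M *ᵥ x) i = ∑ j, (comp ι ι σ σ ℝ).symm M i j *ᵥ curry x j := by
  ext a
  simp [mulVec, dotProduct, Fintype.sum_prod_type, Finset.sum_apply, curry]

variable [DecidableEq ι]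

def cutMatrix (S T : Finset ι) (W : Matrix σ σ ℝ) : Matrix (ι × σ) (ι × σ) ℝ :=
  of fun p q => if p.1 ∈ S ∧ q.1 ∈ T then W p.2 q.2 else 0

lemma dotProduct_cutMatrix_mulVec (S T : Finset ι) (W : Matrix σ σ ℝ) (x : ι × σ → ℝ) :
    x ⬝ᵥ cutMatrix S T W *ᵥ x = (∑ i ∈ S, curry x i) ⬝ᵥ W *ᵥ ∑ j ∈ T, curry x j := by
  have hblock : ∀ i j v, (comp ι ι σ σ ℝ).symm (cutMatrix S T W) i j *ᵥ v =
      if i ∈ S then if j ∈ T then W *ᵥ v else 0 else 0 := by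
    intro i j v
    split_ifs <;> ext a <;> simp [mulVec, dotProduct, cutMatrix, *]
  simp only [dotProduct_eq_sum_curry x, curry_mulVec, hblock, sum_dotProduct, mulVec_sum,
    dotProduct_sum, apply_ite (dotProduct (curry x _)), dotProduct_zero, Finset.sum_ite_irrel,
    Finset.sum_const_zero, Finset.sum_ite_mem, Finset.univ_inter]
  exact Finset.sum_comm

lemma dotProduct_cutMatrix_compl_mulVec_nonpos (S : Finset ι) {W : Matrix σ σ ℝ} (hW : W.PosSemidef)
    {x : ι × σ → ℝ} (hx : ∑ i, curry x i = 0) : x ⬝ᵥ cutMatrix S Sᶜ W *ᵥ x ≤ 0 := by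
  have hSc : ∑ j ∈ Sᶜ, curry x j = -∑ i ∈ S, curry x i := by
    rw [eq_neg_iff_add_eq_zero, add_comm, Finset.sum_add_sum_compl, hx]
  rw [dotProduct_cutMatrix_mulVec, hSc, mulVec_neg, dotProduct_neg, neg_nonpos]
  simpa using hW.dotProduct_mulVec_nonneg (∑ i ∈ S, curry x i)

end Blocks

namespace SimpleGraph

variable {V : Type*} {T : SimpleGraph V}

lemma IsAcyclic.mem_darts_iff_reachable (hT : T.IsAcyclic) (d : T.Dart) {i j : V}
    {p : T.Walk i j} (hp : p.IsPath) :
    d ∈ p.darts ↔ (T.deleteEdges {d.edge}).Reachable i d.fst ∧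
      ¬ (T.deleteEdges {d.edge}).Reachable j d.fst := by
  obtain ⟨⟨u, v⟩, huv⟩ := d
  have hbridge : ¬ (T.deleteEdges {s(u, v)}).Reachable v u := fun h =>
    isAcyclic_iff_forall_adj_isBridge.mp hT huv h.symm
  induction p with
  | nil => simp
  | @cons i w j hiw q ih =>
    rw [Walk.cons_isPath_iff] at hp
    simp only [Walk.darts_cons, List.mem_cons, Dart.edge_mk] at ih ⊢
    by_cases he : s(i, w) = s(u, v)
    · rcases Sym2.eq_iff.mp he with ⟨rfl, rfl⟩ | ⟨rfl, rfl⟩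
      · have hq : s(i, w) ∉ q.edges := fun h => hp.2 (q.fst_mem_support_of_mem_edges h)
        have hwj := (q.toDeleteEdge _ hq).reachable
        simp only [true_or, Reachable.refl, true_and, true_iff]
        exact fun hji => hbridge (hwj.trans hji)
      · have hq : ⟨(w, i), huv⟩ ∉ q.darts := fun h =>
          hp.2 (q.dart_snd_mem_support_of_mem_darts h)
        simp [Dart.ext_iff, hq, hbridge, hiw.ne]
    · have hadj : (T.deleteEdges {s(u, v)}).Adj i w := by simp [hiw, he]
      have hne : (⟨(i, w), hiw⟩ : T.Dart) ≠ ⟨(u, v), huv⟩ := fun h =>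
        he (by simp_all [Dart.ext_iff])
      have hside : (T.deleteEdges {s(u, v)}).Reachable i u ↔
          (T.deleteEdges {s(u, v)}).Reachable w u :=
        ⟨hadj.reachable.symm.trans, hadj.reachable.trans⟩
      simp only [hside, ih hp.1, eq_comm (a := (⟨(u, v), huv⟩ : T.Dart)), hne, false_or]

theorem IsTree.dotProduct_mulVec_nonpos {σ : Type*} [Fintype V] [DecidableEq V] [Fintype σ]
    (hT : T.IsTree) (Wt : V → V → Matrix σ σ ℝ) (hWt : ∀ i j, T.Adj i j → (Wt i j).PosSemidef)
    (D : Matrix (V × σ) (V × σ) ℝ)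
    (hD : ∀ (i j : V) (p : T.Walk i j), p.IsPath →
      ∀ a b : σ, D (i, a) (j, b) = ((p.darts.map fun d => Wt d.toProd.1 d.toProd.2).sum) a b)
    {x : V × σ → ℝ} (hx : ∑ i, curry x i = 0) : x ⬝ᵥ D *ᵥ x ≤ 0 := by
  classical
  let side (d : T.Dart) : Finset V := {i | (T.deleteEdges {d.edge}).Reachable i d.fst}
  have hD_eq : D = ∑ d : T.Dart, cutMatrix (side d) (side d)ᶜ (Wt d.fst d.snd) := by
    ext ⟨i, a⟩ ⟨j, b⟩
    obtain ⟨p, hp⟩ := hT.connected.exists_isPath i j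
    rw [hD i j p hp, ← List.sum_toFinset _ (Walk.darts_nodup_of_support_nodup hp.support_nodup)]
    simp only [Matrix.sum_apply, cutMatrix, of_apply, side, Finset.mem_filter, Finset.mem_compl,
      Finset.mem_univ, true_and, ← hT.isAcyclic.mem_darts_iff_reachable _ hp]
    rw [← Finset.sum_filter]
    congr 1
    ext
    simp
  rw [hD_eq, sum_mulVec, dotProduct_sum]
  exact Finset.sum_nonpos fun d _ => dotProduct_cutMatrix_compl_mulVec_nonpos _ (hWt _ _ d.adj) hx

lemma sum_sum_adj_comm_s6 {M : Type*} [Fintype V] [AddCommMonoid M] (G : SimpleGraph V)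
    [DecidableRel G.Adj] (f : V → V → M) :
    ∑ i, ∑ k ∈ Finset.univ.filter (G.Adj i), f i k =
      ∑ i, ∑ k ∈ Finset.univ.filter (G.Adj i), f k i := by
  simp only [Finset.sum_filter]
  rw [Finset.sum_comm]
  simp only [G.adj_comm]

end SimpleGraph

section Laplacian
variable {n s : ℕ} (G : SimpleGraph (Fin n)) [DecidableRel G.Adj]
  (W : Fin n → Fin n → Matrix (Fin s) (Fin s) ℝ)

lemma curry_lap_mulVec (q : Fin n × Fin s → ℝ) (i : Fin n) :
    curry (lap n s G W *ᵥ q) i =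
      ∑ k ∈ Finset.univ.filter (G.Adj i), (W i k)⁻¹ *ᵥ (curry q i - curry q k) := by
  have hblock : ∀ j v, (comp _ _ _ _ ℝ).symm (lap n s G W) i j *ᵥ v =
      (if i = j then (∑ k ∈ Finset.univ.filter (G.Adj i), (W i k)⁻¹) *ᵥ v else 0) +
        if G.Adj i j then -((W i j)⁻¹ *ᵥ v) else 0 := by
    intro j v
    ext a
    rcases eq_or_ne i j with rfl | hij
    · simp [lap, mulVec, dotProduct]
    · by_cases hadj : G.Adj i j <;> simp [lap, hij, hadj, mulVec, dotProduct]
  simp only [curry_mulVec, hblock, Finset.sum_add_distrib, Finset.sum_ite_eq, Finset.mem_univ,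
    if_true, ← Finset.sum_filter, Finset.sum_neg_distrib, sum_mulVec, mulVec_sub,
    Finset.sum_sub_distrib]
  rw [sub_eq_add_neg]

variable {G W}

lemma sum_curry_lap_mulVec (hW : ∀ i j, W i j = W j i) (q : Fin n × Fin s → ℝ) :
    ∑ i, curry (lap n s G W *ᵥ q) i = 0 := by
  simp only [curry_lap_mulVec, mulVec_sub, Finset.sum_sub_distrib, sub_eq_zero]
  rw [G.sum_sum_adj_comm_s6]
  simp only [hW]

lemma dotProduct_lap_mulVec_nonneg (hW : ∀ i j, W i j = W j i)
    (hWpd : ∀ i j, G.Adj i j → (W i j).PosDef) (q : Fin n × Fin s → ℝ) :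
    0 ≤ q ⬝ᵥ lap n s G W *ᵥ q := by
  set F : Fin n → Fin n → ℝ := fun i k => curry q i ⬝ᵥ (W i k)⁻¹ *ᵥ (curry q i - curry q k)
  have hS : q ⬝ᵥ lap n s G W *ᵥ q = ∑ i, ∑ k ∈ Finset.univ.filter (G.Adj i), F i k := by
    simp only [dotProduct_eq_sum_curry q, curry_lap_mulVec, dotProduct_sum, F]
  have hpair : ∀ i k, G.Adj i k → 0 ≤ F i k + F k i := by
    intro i k hik
    have hsum : F i k + F k i =
        (curry q i - curry q k) ⬝ᵥ (W i k)⁻¹ *ᵥ (curry q i - curry q k) := by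
      simp only [F, hW k i, ← neg_sub (curry q i) (curry q k), mulVec_neg, dotProduct_neg,
        sub_dotProduct]
      ring
    simpa [hsum] using
      (hWpd i k hik).inv.posSemidef.dotProduct_mulVec_nonneg (curry q i - curry q k)
  have h2S : 0 ≤ ∑ i, ∑ k ∈ Finset.univ.filter (G.Adj i), (F i k + F k i) :=
    Finset.sum_nonneg fun i _ => Finset.sum_nonneg fun k hk => hpair i k (Finset.mem_filter.mp hk).2
  simp only [Finset.sum_add_distrib] at h2S
  rw [← G.sum_sum_adj_comm_s6 F] at h2S
  linarith

end Laplacian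

section Jmat
variable {n s : ℕ}

lemma curry_Jmat_mulVec (p : Fin n × Fin s → ℝ) (i : Fin n) :
    curry (Jmat n s *ᵥ p) i = ∑ j, curry p j := by
  ext a
  simp [Jmat, mulVec, dotProduct, Fintype.sum_prod_type, Finset.sum_apply, curry]

lemma Jmat_mulVec_eq_zero_iff {p : Fin n × Fin s → ℝ} :
    Jmat n s *ᵥ p = 0 ↔ ∑ i, curry p i = 0 := by
  rcases isEmpty_or_nonempty (Fin n) with hn | ⟨⟨i⟩⟩
  · simp [Subsingleton.elim (Jmat n s *ᵥ p) 0]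
  · refine ⟨fun hp => ?_, fun hp => funext fun ⟨j, a⟩ => congrFun (curry_Jmat_mulVec p j ▸ hp) a⟩
    rw [← curry_Jmat_mulVec p i, hp]
    rfl

end Jmat

theorem stmt6_general (n s : ℕ)
    (T : SimpleGraph (Fin n)) (hT : T.IsTree)
    (Wt : Fin n → Fin n → Matrix (Fin s) (Fin s) ℝ)
    (hWtpd : ∀ i j, T.Adj i j → (Wt i j).PosDef)
    (D : Matrix (Fin n × Fin s) (Fin n × Fin s) ℝ)
    (hD : ∀ (i j : Fin n) (p : T.Walk i j), p.IsPath →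
      ∀ a b : Fin s, D (i, a) (j, b) =
        ((p.darts.map fun d => Wt d.toProd.1 d.toProd.2).sum) a b)
    (hDdet : IsUnit D.det)
    (G : SimpleGraph (Fin n)) [DecidableRel G.Adj]
    (W : Fin n → Fin n → Matrix (Fin s) (Fin s) ℝ)
    (hWsym : ∀ i j, W i j = W j i)
    (hWpd : ∀ i j, G.Adj i j → (W i j).PosDef)
    (β : ℝ) (hβ : 0 ≤ β) :
    ∀ p : Fin n × Fin s → ℝ, (Jmat n s).mulVec p = 0 →
      p ⬝ᵥ ((D⁻¹ - β • lap n s G W)⁻¹).mulVec p ≤ 0 := by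
  intro p hp
  refine dotProduct_inv_sub_smul_mulVec_nonpos (M := LinearMap.ker (Jmat n s).mulVecLin) hDdet
    (fun x hx => ?_) (dotProduct_lap_mulVec_nonneg hWsym hWpd)
    (fun x => Jmat_mulVec_eq_zero_iff.mpr (sum_curry_lap_mulVec hWsym x)) hβ hp
  exact hT.dotProduct_mulVec_nonpos Wt (fun i j h => (hWtpd i j h).posSemidef) D hD
    (Jmat_mulVec_eq_zero_iff.mp hx)

/-- For every β ≥ 0, the matrix (D⁻¹ − βL)⁻¹ is negative semidefinite on the
null space of J. -/
theorem stmt6 (n s : ℕ) (hn : 0 < n) (hs : 0 < s)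
    (T : SimpleGraph (Fin n)) (hT : T.IsTree)
    (Wt : Fin n → Fin n → Matrix (Fin s) (Fin s) ℝ)
    (hWtsym : ∀ i j, Wt i j = Wt j i)
    (hWtpd : ∀ i j, T.Adj i j → (Wt i j).PosDef)
    (D : Matrix (Fin n × Fin s) (Fin n × Fin s) ℝ)
    (hD : ∀ (i j : Fin n) (p : T.Walk i j), p.IsPath →
      ∀ a b : Fin s, D (i, a) (j, b) =
        ((p.darts.map fun d => Wt d.toProd.1 d.toProd.2).sum) a b)
    (hDdet : IsUnit D.det)
    (G : SimpleGraph (Fin n)) [DecidableRel G.Adj] (hG : G.Connected)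
    (W : Fin n → Fin n → Matrix (Fin s) (Fin s) ℝ)
    (hWsym : ∀ i j, W i j = W j i)
    (hWpd : ∀ i j, G.Adj i j → (W i j).PosDef)
    (β : ℝ) (hβ : 0 ≤ β) :
    ∀ p : Fin n × Fin s → ℝ, (Jmat n s).mulVec p = 0 →
      p ⬝ᵥ ((D⁻¹ - β • lap n s G W)⁻¹).mulVec p ≤ 0 :=
  stmt6_general n s T hT Wt hWtpd D hD hDdet G W hWsym hWpd β hβ
end
end
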